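/- For every μ > 0, the matrices P_μ := I_m + μ·S·D and A_μ := I_m + μ·Iinv·D are invertible and every complex eigenvalue of P_μ⁻¹A_μ is a real number lying in [1, ∞). -/

import Mathlib

/-!
Since the sinc integrand is even, `Iinv + Iinvᵀ = e eᵀ`, so `Iinv = S + ½ e eᵀ` and
`A = P + (μ/2) e dᵀ` is a rank-one perturbation of `P`. Skewness of `S` gives
`⟨Dx, P x⟩ = ⟨Dx, x⟩ > 0` for `x ≠ 0`, so `P` is invertible, and
`P⁻¹ A = I + w dᵀ` with `w = (μ/2) P⁻¹ e`. The eigenvalues of `I + w dᵀ` are `1` and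
`1 + dᵀw`, and `dᵀ P⁻¹ e = ⟨D u, P u⟩ = ⟨D u, u⟩ ≥ 0` for `u = P⁻¹ e`.
-/

open Matrix

/-- The sinc integrand `sin(πt)/(πt)`, extended by the value 1 at `t = 0`. -/
noncomputable def sincFn (t : ℝ) : ℝ :=
  if t = 0 then 1 else Real.sin (Real.pi * t) / (Real.pi * t)

/-- The `m × m` Toeplitz matrix `Iinv(k,l) = 1/2 + ∫₀^{k-l} sin(πt)/(πt) dt`. -/
noncomputable def IinvMat (m : ℕ) : Matrix (Fin m) (Fin m) ℝ :=
  fun k l => 1 / 2 + ∫ t in (0 : ℝ)..((k : ℝ) - (l : ℝ)), sincFn t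

/-- The skew-symmetric part `S = (Iinv - Iinvᵀ)/2`. -/
noncomputable def Smat (m : ℕ) : Matrix (Fin m) (Fin m) ℝ :=
  (2 : ℝ)⁻¹ • (IinvMat m - (IinvMat m)ᵀ)

/-- The all-ones vector `e ∈ ℝ^m`. -/
def eVec (m : ℕ) : Fin m → ℝ := fun _ => 1

namespace Matrix

theorem map_vecMulVec {m n α β F : Type*} [Mul α] [Mul β] [FunLike F α β] [MulHomClass F α β]
    (f : F) (u : m → α) (v : n → α) : (vecMulVec u v).map f = vecMulVec (f ∘ u) (f ∘ v) := by
  ext i j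
  simp [vecMulVec_apply]

variable {n : Type*} [Fintype n]

theorem dotProduct_mulVec_self_eq_zero_of_transpose_eq_neg {R : Type*} [CommRing R]
    [NoZeroDivisors R] [CharZero R] {S : Matrix n n R} (hS : Sᵀ = -S) (x : n → R) :
    x ⬝ᵥ (S *ᵥ x) = 0 := by
  rw [← CharZero.eq_neg_self_iff]
  conv_lhs => rw [dotProduct_mulVec, ← mulVec_transpose, hS, neg_mulVec, neg_dotProduct,
    dotProduct_comm]

theorem eq_one_or_eq_one_add_dotProduct_of_one_add_vecMulVec_mulVec_eq_smul {K : Type*} [Field K]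
    [DecidableEq n] {u v ξ : n → K} {lam : K} (hξ : ξ ≠ 0)
    (h : (1 + vecMulVec u v) *ᵥ ξ = lam • ξ) : lam = 1 ∨ lam = 1 + v ⬝ᵥ u := by
  rw [add_mulVec, one_mulVec, vecMulVec_mulVec, op_smul_eq_smul] at h
  have hξu : (lam - 1) • ξ = (v ⬝ᵥ ξ) • u := by rw [sub_smul, ← h, one_smul, add_sub_cancel_left]
  rcases eq_or_ne lam 1 with hlam | hlam
  · exact .inl hlam
  have hvξ : v ⬝ᵥ ξ ≠ 0 := by
    intro hvξ
    rw [hvξ, zero_smul, smul_eq_zero] at hξu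
    exact hξu.elim (fun h => hlam (sub_eq_zero.1 h)) hξ
  have := congrArg (v ⬝ᵥ ·) hξu
  simp only [dotProduct_smul, smul_eq_mul] at this
  exact .inr (eq_add_of_sub_eq' (mul_right_cancel₀ hvξ (by linear_combination this)))

theorem isUnit_one_add_vecMulVec {K : Type*} [Field K] [DecidableEq n] {u v : n → K}
    (h : 1 + v ⬝ᵥ u ≠ 0) : IsUnit (1 + vecMulVec u v) := by
  refine mulVec_injective_iff_isUnit.1 ((injective_iff_map_eq_zero (mulVecLin _)).2 fun ξ hξ => ?_)
  by_contra hξ0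
  have hξ' : (1 + vecMulVec u v) *ᵥ ξ = (0 : K) • ξ := by rw [zero_smul]; exact hξ
  rcases eq_one_or_eq_one_add_dotProduct_of_one_add_vecMulVec_mulVec_eq_smul hξ0 hξ' with h0 | h0
  · exact zero_ne_one h0
  · exact h h0.symm

section OrderedField

variable {R : Type*} [Field R] [LinearOrder R] [IsStrictOrderedRing R] [DecidableEq n]

theorem diagonal_mulVec_dotProduct_self_nonneg {d : n → R} (hd : ∀ i, 0 ≤ d i) (x : n → R) :
    0 ≤ (diagonal d *ᵥ x) ⬝ᵥ x := by
  simp only [dotProduct, mulVec_diagonal, mul_assoc]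
  exact Finset.sum_nonneg fun i _ => mul_nonneg (hd i) (mul_self_nonneg (x i))

theorem diagonal_mulVec_dotProduct_self_pos {d : n → R} (hd : ∀ i, 0 < d i) {x : n → R}
    (hx : x ≠ 0) : 0 < (diagonal d *ᵥ x) ⬝ᵥ x := by
  obtain ⟨i, hi⟩ := Function.ne_iff.1 hx
  simp only [dotProduct, mulVec_diagonal, mul_assoc]
  exact Finset.sum_pos' (fun j _ => mul_nonneg (hd j).le (mul_self_nonneg (x j)))
    ⟨i, Finset.mem_univ i, mul_pos (hd i) (mul_self_pos.2 hi)⟩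

theorem isUnit_of_diagonal_mulVec_dotProduct_le {d : n → R} (hd : ∀ i, 0 < d i)
    {M : Matrix n n R} (h : ∀ x, (diagonal d *ᵥ x) ⬝ᵥ x ≤ (diagonal d *ᵥ x) ⬝ᵥ (M *ᵥ x)) :
    IsUnit M := by
  refine mulVec_injective_iff_isUnit.1 ((injective_iff_map_eq_zero (mulVecLin M)).2 fun x hx => ?_)
  rw [mulVecLin_apply] at hx
  by_contra hx0
  have := h x
  rw [hx, dotProduct_zero] at this
  exact (diagonal_mulVec_dotProduct_self_pos hd hx0).not_ge this

variable {S : Matrix n n R} (hS : Sᵀ = -S) (d : n → R) (μ : R)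
include hS

theorem diagonal_mulVec_dotProduct_one_add_skew_mul_diagonal (x : n → R) :
    (diagonal d *ᵥ x) ⬝ᵥ ((1 + μ • (S * diagonal d)) *ᵥ x) = (diagonal d *ᵥ x) ⬝ᵥ x := by
  rw [add_mulVec, one_mulVec, dotProduct_add, smul_mulVec, ← mulVec_mulVec, dotProduct_smul,
    dotProduct_mulVec_self_eq_zero_of_transpose_eq_neg hS, smul_zero, add_zero]

theorem dotProduct_nonneg_of_one_add_skew_mul_diagonal_mulVec_eq_one (hd : ∀ i, 0 ≤ d i)
    {u : n → R} (hu : (1 + μ • (S * diagonal d)) *ᵥ u = 1) : 0 ≤ d ⬝ᵥ u := by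
  have hdu : d ⬝ᵥ u = (diagonal d *ᵥ u) ⬝ᵥ 1 := by simp [dotProduct, mulVec_diagonal]
  rw [hdu, ← hu, diagonal_mulVec_dotProduct_one_add_skew_mul_diagonal hS]
  exact diagonal_mulVec_dotProduct_self_nonneg hd u

end OrderedField

end Matrix

theorem sincFn_neg (t : ℝ) : sincFn (-t) = sincFn t := by
  rcases eq_or_ne t 0 with rfl | ht
  · simp
  · simp only [sincFn, neg_eq_zero, ht, if_false, mul_neg, Real.sin_neg, neg_div_neg_eq]

theorem integral_sincFn_neg (c : ℝ) :
    ∫ t in (0 : ℝ)..(-c), sincFn t = -∫ t in (0 : ℝ)..c, sincFn t := by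
  conv_lhs => rw [← neg_zero, ← intervalIntegral.integral_comp_neg]
  simp only [sincFn_neg]
  exact intervalIntegral.integral_symm _ _

theorem IinvMat_add_IinvMat_swap (m : ℕ) (k l : Fin m) : IinvMat m k l + IinvMat m l k = 1 := by
  simp only [IinvMat]
  rw [← neg_sub, integral_sincFn_neg]
  ring

theorem Smat_transpose (m : ℕ) : (Smat m)ᵀ = -Smat m := by
  rw [Smat, transpose_smul, transpose_sub, transpose_transpose, ← smul_neg, neg_sub]

theorem IinvMat_eq_Smat_add (m : ℕ) : IinvMat m = Smat m + (2 : ℝ)⁻¹ • vecMulVec 1 1 := by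
  ext k l
  have := IinvMat_add_IinvMat_swap m k l
  simp only [Smat, Matrix.add_apply, Matrix.smul_apply, Matrix.sub_apply, transpose_apply,
    vecMulVec_apply, Pi.one_apply, smul_eq_mul]
  linarith

theorem stmt7 (m : ℕ) (d : Fin m → ℝ) (hd : ∀ j, 0 < d j) (μ : ℝ) (hμ : 0 < μ) :
    let D : Matrix (Fin m) (Fin m) ℝ := Matrix.diagonal d
    let P : Matrix (Fin m) (Fin m) ℝ := 1 + μ • (Smat m * D)
    let A : Matrix (Fin m) (Fin m) ℝ := 1 + μ • (IinvMat m * D)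
    IsUnit P ∧ IsUnit A ∧
      ∀ (lam : ℂ) (ξ : Fin m → ℂ), ξ ≠ 0 →
        ((P⁻¹ * A).map Complex.ofReal).mulVec ξ = lam • ξ →
        lam.im = 0 ∧ 1 ≤ lam.re := by
  intro D P A
  have hS := Smat_transpose m
  have hP : IsUnit P := isUnit_of_diagonal_mulVec_dotProduct_le hd fun x =>
    (diagonal_mulVec_dotProduct_one_add_skew_mul_diagonal hS d μ x).ge
  have hPdet := (isUnit_iff_isUnit_det P).1 hP
  have hA_eq : A = P + (μ / 2) • vecMulVec 1 d := by
    simp only [A, P, D, IinvMat_eq_Smat_add, Matrix.add_mul, Matrix.smul_mul, vecMulVec_mul,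
      smul_add, smul_smul]
    rw [show (1 : Fin m → ℝ) ᵥ* diagonal d = d from funext fun i => by simp [vecMul_diagonal],
      add_assoc, div_eq_mul_inv]
  set w : Fin m → ℝ := (μ / 2) • (P⁻¹ *ᵥ 1)
  have hPA : P⁻¹ * A = 1 + vecMulVec w d := by
    rw [hA_eq, Matrix.mul_add, nonsing_inv_mul _ hPdet, Matrix.mul_smul, mul_vecMulVec,
      smul_vecMulVec]
  have hw : 0 ≤ d ⬝ᵥ w := by
    have hu : P *ᵥ (P⁻¹ *ᵥ 1) = 1 := by rw [mulVec_mulVec, mul_nonsing_inv _ hPdet, one_mulVec]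
    have := dotProduct_nonneg_of_one_add_skew_mul_diagonal_mulVec_eq_one hS d μ
      (fun i => (hd i).le) hu
    rw [dotProduct_smul, smul_eq_mul]
    exact mul_nonneg (by positivity) this
  refine ⟨hP, ?_, fun lam ξ hξ h => ?_⟩
  · rw [← mul_nonsing_inv_cancel_left P A hPdet, hPA]
    exact hP.mul (isUnit_one_add_vecMulVec (by positivity))
  · rw [hPA] at h
    change (Complex.ofRealHom.mapMatrix (1 + vecMulVec w d)) *ᵥ ξ = _ at h
    rw [map_add, map_one, RingHom.mapMatrix_apply, map_vecMulVec] at h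
    rcases eq_one_or_eq_one_add_dotProduct_of_one_add_vecMulVec_mulVec_eq_smul hξ h with rfl | rfl
    · simp
    · rw [← RingHom.map_dotProduct]
      simpa using hw
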